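/- arXiv:2505.10789 — 6 statements merged into one kernel-verified Lean document; each statement's English description precedes it below -/
import Mathlib

section
/- For any connected finite simple graph G, the bandwidth of G is at most 2·bfsw_min(G) − 1, where bfsw_min(G) is the minimum over vertices v of the maximum layer size of the breadth-first layering from v. -/
open SimpleGraph

/-- Number of vertices at distance exactly `i` from `v`. -/
noncomputable def layerCard {V : Type*} (G : SimpleGraph V) (v : V) (i : ℕ) : ℕ :=
  ({u : V | G.dist v u = i}).ncard

/-- BFS width of `G` from root `v`: the maximum layer size. -/
noncomputable def bfswFrom {V : Type*} (G : SimpleGraph V) (v : V) : ℕ :=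
  sSup (Set.range (layerCard G v))

/-- BFS width of `G`: maximum over roots. -/
noncomputable def bfsw {V : Type*} (G : SimpleGraph V) : ℕ :=
  sSup (Set.range (bfswFrom G))

/-- Minimum BFS width of `G`: minimum over roots. -/
noncomputable def bfswMin {V : Type*} (G : SimpleGraph V) : ℕ :=
  sInf (Set.range (bfswFrom G))

/-- Bandwidth of `G`: least `b` such that some linear layout has all edges of length `≤ b`. -/
noncomputable def bw {V : Type*} [Fintype V] (G : SimpleGraph V) : ℕ :=
  sInf { b : ℕ | ∃ f : V ≃ Fin (Fintype.card V),
    ∀ u w : V, G.Adj u w → ((f u : ℤ) - (f w : ℤ)).natAbs ≤ b }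

/-!
Order the vertices by their distance from a root `v` attaining `bfswMin G`, breaking ties
arbitrarily. The endpoints of an edge lie in the same or in consecutive BFS layers, and every
vertex placed between them lies in one of those two layers, so no edge is stretched over more
than `2 * bfswFrom G v` positions.
-/

open Finset

lemma layerCard_le_bfswFrom {V : Type*} [Finite V] (G : SimpleGraph V) (v : V) (i : ℕ) :
    layerCard G v i ≤ bfswFrom G v :=
  le_csSup ⟨Nat.card V, by rintro _ ⟨j, rfl⟩; exact Set.ncard_le_card _⟩ ⟨i, rfl⟩

section Layout

variable {V : Type*} [Fintype V]

lemma bw_le_of_adj_le {G : SimpleGraph V} {b : ℕ} (f : V ≃ Fin (Fintype.card V))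
    (h : ∀ u w, G.Adj u w → f u ≤ f w → (f w : ℕ) - f u ≤ b) : bw G ≤ b := by
  refine Nat.sInf_le ⟨f, fun u w huw => ?_⟩
  rcases le_total (f u) (f w) with hle | hle
  · have := h u w huw hle
    have : (f u : ℕ) ≤ f w := hle
    omega
  · have := h w u huw.symm hle
    have : (f w : ℕ) ≤ f u := hle
    omega

lemma exists_equiv_fin_lt_of_lt {α : Type*} [LinearOrder α] (d : V → α) :
    ∃ f : V ≃ Fin (Fintype.card V), ∀ u w, d u < d w → f u < f w := by
  let key : V → α ×ₗ Fin (Fintype.card V) := fun x => toLex (d x, Fintype.equivFin V x)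
  have hkey : key.Injective := fun x y hxy =>
    (Fintype.equivFin V).injective (congrArg Prod.snd (toLex.injective hxy))
  let : LinearOrder V := LinearOrder.lift' key hkey
  refine ⟨(monoEquivOfFin V rfl).symm.toEquiv, fun u w h => ?_⟩
  exact (monoEquivOfFin V rfl).symm.strictMono (Prod.Lex.toLex_lt_toLex.2 (Or.inl h))

theorem bw_le_of_levels (G : SimpleGraph V) (d : V → ℕ) (w : ℕ)
    (hadj : ∀ u x, G.Adj u x → d x ≤ d u + 1) (hlevel : ∀ i, #{x | d x = i} ≤ w) :
    bw G ≤ 2 * w - 1 := by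
  classical
  obtain ⟨f, hf⟩ := exists_equiv_fin_lt_of_lt d
  refine bw_le_of_adj_le f fun u x hux hle => ?_
  have hbetween : (Icc (f u) (f x)).map f.symm.toEmbedding ⊆
      (({y | d y = d u} : Finset V) ∪ ({y | d y = d u + 1} : Finset V)) := by
    intro y hy
    obtain ⟨k, hk, rfl⟩ := mem_map.1 hy
    obtain ⟨hk₁, hk₂⟩ := mem_Icc.1 hk
    have h₁ : d u ≤ d (f.symm k) := not_lt.1 fun h => (hf _ _ h).not_ge (by simpa using hk₁)
    have h₂ : d (f.symm k) ≤ d x := not_lt.1 fun h => (hf _ _ h).not_ge (by simpa using hk₂)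
    have := hadj u x hux
    simp only [Equiv.coe_toEmbedding, mem_union, mem_filter, mem_univ, true_and]
    omega
  calc (f x : ℕ) - f u ≤ #(Icc (f u) (f x)) - 1 := by rw [Fin.card_Icc]; omega
    _ = #((Icc (f u) (f x)).map f.symm.toEmbedding) - 1 := by rw [card_map]
    _ ≤ #(({y | d y = d u} : Finset V) ∪ ({y | d y = d u + 1} : Finset V)) - 1 := by gcongr
    _ ≤ 2 * w - 1 := by
      have := (card_union_le _ _).trans (add_le_add (hlevel (d u)) (hlevel (d u + 1)))
      omega

lemma layerCard_eq_card_filter (G : SimpleGraph V) (v : V) (i : ℕ) :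
    layerCard G v i = #{u | G.dist v u = i} := by
  rw [layerCard, ← Set.ncard_coe_finset, coe_filter]
  simp only [mem_univ, true_and]

theorem bw_le_two_bfswFrom (G : SimpleGraph V) (v : V) :
    bw G ≤ 2 * bfswFrom G v - 1 := by
  refine bw_le_of_levels G (G.dist v) _ (fun u x hux => ?_) fun i => ?_
  · simpa [dist_eq_one_iff_adj.2 hux] using hux.reachable.dist_triangle_right v
  · exact layerCard_eq_card_filter G v i ▸ layerCard_le_bfswFrom G v i

end Layout

theorem bw_le_two_bfswMin_general {V : Type*} [Fintype V] [Nonempty V]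
    (G : SimpleGraph V) :
    bw G ≤ 2 * bfswMin G - 1 := by
  obtain ⟨v, hv⟩ : bfswMin G ∈ Set.range (bfswFrom G) := Nat.sInf_mem (Set.range_nonempty _)
  exact hv ▸ bw_le_two_bfswFrom G v

/-- The bandwidth of a connected graph is at most twice its minimum BFS width minus one. -/
theorem bw_le_two_bfswMin {V : Type*} [Fintype V] [Nonempty V]
    (G : SimpleGraph V) (hG : G.Connected) :
    bw G ≤ 2 * bfswMin G - 1 :=
  bw_le_two_bfswMin_general G
end

section
/- If G is a caterpillar tree with maximum degree Δ ≥ 2, then the BFS width of G is at most 2(Δ − 1), i.e., for every vertex v and every i, the number of vertices at distance exactly i from v is at most 2(Δ−1). -/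
open SimpleGraph

section Aux
variable {V : Type*} {G : SimpleGraph V}

private lemma length_eq_dist_of_isPath (hT : G.IsTree) {a b : V}
    {q : G.Walk a b} (hq : q.IsPath) : q.length = G.dist a b := by
  obtain ⟨r, hr, hrl⟩ := hT.isConnected.exists_path_of_dist a b
  obtain ⟨w0, -, hu⟩ := hT.existsUnique_path a b
  have : q = r := (hu q hq).trans (hu r hr).symm
  rw [this, hrl]

private lemma dist_add_of_mem_support (hT : G.IsTree) {a b m : V}
    {q : G.Walk a b} (hq : q.IsPath) (hm : m ∈ q.support) :
    G.dist a b = G.dist a m + G.dist m b := by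
  classical
  rw [← length_eq_dist_of_isPath hT hq, ← length_eq_dist_of_isPath hT (hq.takeUntil hm),
    ← length_eq_dist_of_isPath hT (hq.dropUntil hm)]
  conv_lhs => rw [← q.take_spec hm]
  rw [Walk.length_append]

private lemma exists_parent (hc : G.Connected) {v u : V} {i : ℕ}
    (hd : G.dist v u = i) (hi : i ≠ 0) :
    ∃ w, G.Adj w u ∧ G.dist v w = i - 1 := by
  have hne : v ≠ u := by rintro rfl; rw [dist_self] at hd; omega
  obtain ⟨q, hql⟩ := (hc v u).exists_walk_length_eq_dist
  obtain ⟨w, h, r, hqr⟩ := Walk.exists_eq_cons_of_ne hne.symm q.reverse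
  have hrl : r.length = i - 1 := by
    have h2 := congrArg Walk.length hqr
    rw [Walk.length_reverse, hql, hd, Walk.length_cons] at h2
    omega
  refine ⟨w, h.symm, le_antisymm ?_ ?_⟩
  · calc G.dist v w ≤ r.reverse.length := dist_le _
      _ = i - 1 := by rw [Walk.length_reverse, hrl]
  · have htri : G.dist v u ≤ G.dist v w + G.dist w u := hc.dist_triangle
    have h1 : G.dist w u = 1 := dist_eq_one_iff_adj.mpr h.symm
    omega

end Aux


section Aux2
variable {V : Type*} {G : SimpleGraph V}

private lemma exists_path_within [DecidableEq V] {x y s w : V} {p : G.Walk x y}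
    (hs : s ∈ p.support) (hw : w ∈ p.support) :
    ∃ r : G.Walk s w, r.IsPath ∧ ∀ z ∈ r.support, z ∈ p.support := by
  obtain ⟨r0, hr0⟩ : ∃ r0 : G.Walk s w, ∀ z ∈ r0.support, z ∈ p.support := by
    by_cases hw2 : w ∈ (p.dropUntil s hs).support
    · exact ⟨(p.dropUntil s hs).takeUntil w hw2, fun z hz =>
        Walk.support_dropUntil_subset _ _ (Walk.support_takeUntil_subset _ _ hz)⟩
    · have hw1 : w ∈ (p.takeUntil s hs).support := by
        have hsplit : w ∈ (p.takeUntil s hs).support ∨ w ∈ (p.dropUntil s hs).support := by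
          rw [← Walk.mem_support_append_iff, p.take_spec hs]; exact hw
        tauto
      exact ⟨((p.takeUntil s hs).dropUntil w hw1).reverse, fun z hz => by
        rw [Walk.support_reverse, List.mem_reverse] at hz
        exact Walk.support_takeUntil_subset _ _ (Walk.support_dropUntil_subset _ _ hz)⟩
  exact ⟨r0.bypass, r0.bypass_isPath, fun z hz => hr0 z (r0.support_bypass_subset hz)⟩

private lemma spine_nbr (hc : G.Connected) {x y : V} {p : G.Walk x y}
    (hcov : ∀ u : V, ∃ s ∈ p.support, G.dist s u ≤ 1)
    {u : V} (hu : u ∉ p.support) :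
    ∃ s ∈ p.support, G.Adj s u := by
  obtain ⟨s, hsS, hd⟩ := hcov u
  have hne : s ≠ u := fun h => hu (h ▸ hsS)
  have hpos : 0 < G.dist s u := hc.pos_dist_of_ne hne
  exact ⟨s, hsS, dist_eq_one_iff_adj.mp (by omega)⟩

private lemma leaf_unique_nbr (hT : G.IsTree) {x y : V} {p : G.Walk x y}
    (hcov : ∀ u : V, ∃ s ∈ p.support, G.dist s u ≤ 1)
    {u : V} (hu : u ∉ p.support) :
    ∃ s ∈ p.support, ∀ w, G.Adj u w → w = s := by
  classical
  obtain ⟨s, hsS, hadj⟩ := spine_nbr hT.isConnected hcov hu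
  refine ⟨s, hsS, fun w hw => ?_⟩
  by_contra hws
  have hsu : s ≠ u := G.ne_of_adj hadj
  have huw : u ≠ w := G.ne_of_adj hw
  by_cases hwS : w ∈ p.support
  · have hsw : s ≠ w := fun h => hws (h.symm)
    obtain ⟨r, hr, hrsub⟩ := exists_path_within hsS hwS
    have hq : (Walk.cons hadj (Walk.cons hw Walk.nil) : G.Walk s w).IsPath := by
      simp [Walk.isPath_def, hsu, huw, hsw]
    have heq := hT.IsAcyclic.path_unique ⟨r, hr⟩ ⟨_, hq⟩
    have hmem : u ∈ r.support := by
      have : r = Walk.cons hadj (Walk.cons hw Walk.nil) := congrArg Subtype.val heq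
      rw [this]; simp
    exact hu (hrsub u hmem)
  · obtain ⟨s', hs'S, hadj'⟩ := spine_nbr hT.isConnected hcov hwS
    have hus' : u ≠ s' := fun h => hu (h ▸ hs'S)
    have hsw : s ≠ w := fun h => hwS (h ▸ hsS)
    by_cases hss' : s' = s
    · subst hss'
      have hq1 : (Walk.cons hadj (Walk.cons hw Walk.nil) : G.Walk s' w).IsPath := by
        simp [Walk.isPath_def, hsu, huw, hsw]
      have hq2 : (Walk.cons hadj' Walk.nil : G.Walk s' w).IsPath := by
        simp [Walk.isPath_def, hsw]
      have heq := hT.IsAcyclic.path_unique ⟨_, hq1⟩ ⟨_, hq2⟩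
      have : (Walk.cons hadj (Walk.cons hw Walk.nil) : G.Walk s' w) = Walk.cons hadj' Walk.nil :=
        congrArg Subtype.val heq
      have hlen := congrArg Walk.length this
      simp at hlen
    · have hws' : w ≠ s' := fun h => hwS (h ▸ hs'S)
      have hss'2 : s ≠ s' := fun h => hss' h.symm
      have hq1 : (Walk.cons hadj (Walk.cons hw (Walk.cons hadj'.symm Walk.nil)) :
          G.Walk s s').IsPath := by
        simp [Walk.isPath_def, hsu, huw, hsw, hus', hws', hss'2]
      obtain ⟨r, hr, hrsub⟩ := exists_path_within hsS hs'S
      have heq := hT.IsAcyclic.path_unique ⟨r, hr⟩ ⟨_, hq1⟩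
      have hmem : u ∈ r.support := by
        have : r = Walk.cons hadj (Walk.cons hw (Walk.cons hadj'.symm Walk.nil)) :=
          congrArg Subtype.val heq
        rw [this]; simp
      exact hu (hrsub u hmem)

end Aux2

section Aux3
variable {V : Type*} {G : SimpleGraph V}

private lemma getVert_dist (hT : G.IsTree) [DecidableEq V] {m y s : V} {q : G.Walk m y}
    (hq : q.IsPath) (hs : s ∈ q.support) : q.getVert (G.dist m s) = s := by
  have h1 : (q.takeUntil s hs).length = G.dist m s :=
    length_eq_dist_of_isPath hT (hq.takeUntil hs)
  have h2 := Walk.getVert_append (q.takeUntil s hs) (q.dropUntil s hs)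
    ((q.takeUntil s hs).length)
  rw [q.take_spec hs] at h2
  rw [← h1, h2]
  simp

private lemma exists_gate (hT : G.IsTree) {x y : V} {p : G.Walk x y} (hp : p.IsPath) (v : V) :
    ∃ m, ∃ hm : m ∈ p.support, ∀ s ∈ p.support, G.dist v s = G.dist v m + G.dist m s := by
  classical
  obtain ⟨m, hm, hmin⟩ := p.support.toFinset.exists_min_image (G.dist v)
    ⟨x, by simp⟩
  rw [List.mem_toFinset] at hm
  have hc := hT.isConnected
  refine ⟨m, hm, fun s hsS => ?_⟩
  obtain ⟨g, hgP, hgl⟩ := hc.exists_path_of_dist v m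
  have hginter : ∀ z ∈ g.support, z ∈ p.support → z = m := fun z hz hzS => by
    have h1 : G.dist v m = G.dist v z + G.dist z m := dist_add_of_mem_support hT hgP hz
    have h2 : G.dist v m ≤ G.dist v z := hmin z (List.mem_toFinset.mpr hzS)
    have h3 : G.dist z m = 0 := by omega
    exact (hc z m).dist_eq_zero_iff.mp h3
  obtain ⟨r, hrP, hrsub⟩ := exists_path_within hm hsS
  have hmr : m ∉ r.support.tail := by
    have hnd : r.support.Nodup := hrP.support_nodup
    rw [r.support_eq_cons] at hnd
    exact (List.nodup_cons.mp hnd).1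
  have hPath : (g.append r).IsPath := by
    rw [Walk.isPath_def, Walk.support_append]
    refine List.Nodup.append hgP.support_nodup (hrP.support_nodup.tail) ?_
    intro z hz1 hz2
    have hzr : z ∈ r.support := List.mem_of_mem_tail hz2
    have : z = m := hginter z hz1 (hrsub z hzr)
    subst this
    exact hmr hz2
  have hlen : (g.append r).length = G.dist v s := length_eq_dist_of_isPath hT hPath
  rw [Walk.length_append, hgl] at hlen
  have hr_d : G.dist m s ≤ r.length := dist_le r
  have htri : G.dist v s ≤ G.dist v m + G.dist m s := hc.dist_triangle
  omega

private lemma spine_layer_le_two (hT : G.IsTree) {x y : V} {p : G.Walk x y} (hp : p.IsPath)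
    (v : V) (j : ℕ) :
    ∃ a b : V, ∀ s ∈ p.support, G.dist v s = j → s = a ∨ s = b := by
  classical
  obtain ⟨m, hm, hgate⟩ := exists_gate hT hp v
  refine ⟨(p.dropUntil m hm).getVert (j - G.dist v m),
    ((p.takeUntil m hm).reverse).getVert (j - G.dist v m), fun s hsS hds => ?_⟩
  have hadd := hgate s hsS
  have hdm : G.dist m s = j - G.dist v m := by omega
  have hsplit : s ∈ (p.takeUntil m hm).support ∨ s ∈ (p.dropUntil m hm).support := by
    rw [← Walk.mem_support_append_iff, p.take_spec hm]; exact hsS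
  rcases hsplit with h | h
  · right; rw [← hdm]
    have hs' : s ∈ (p.takeUntil m hm).reverse.support := by
      rw [Walk.support_reverse, List.mem_reverse]; exact h
    exact (getVert_dist hT (hp.takeUntil hm).reverse hs').symm
  · left; rw [← hdm]
    exact (getVert_dist hT (hp.dropUntil hm) h).symm

private lemma childSet_bound [Fintype V] [DecidableRel G.Adj] (hT : G.IsTree)
    (v w : V) {i : ℕ} (hi : 2 ≤ i) :
    {u : V | G.Adj w u ∧ G.dist v u = i ∧ G.dist v w = i - 1}.ncard ≤ G.maxDegree - 1 := by
  classical
  rcases Set.eq_empty_or_nonempty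
    {u : V | G.Adj w u ∧ G.dist v u = i ∧ G.dist v w = i - 1} with he | ⟨u0, hu0⟩
  · simp [he]
  · obtain ⟨-, -, hw⟩ := hu0
    obtain ⟨z, hz, hzd⟩ := exists_parent hT.isConnected hw (by omega)
    have hzmem : z ∈ G.neighborSet w := hz.symm
    have hsub : {u : V | G.Adj w u ∧ G.dist v u = i ∧ G.dist v w = i - 1}
        ⊆ G.neighborSet w \ {z} := by
      rintro u ⟨ha, hd, -⟩
      refine ⟨ha, fun h => ?_⟩
      rw [Set.mem_singleton_iff] at h
      subst h
      rw [hd] at hzd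
      omega
    calc {u : V | G.Adj w u ∧ G.dist v u = i ∧ G.dist v w = i - 1}.ncard
        ≤ (G.neighborSet w \ {z}).ncard := Set.ncard_le_ncard hsub (Set.toFinite _)
      _ = (G.neighborSet w).ncard - 1 := Set.ncard_diff_singleton_of_mem hzmem
      _ = G.degree w - 1 := by
          rw [Set.ncard_eq_toFinset_card', ← neighborFinset_def]; rfl
      _ ≤ G.maxDegree - 1 := Nat.sub_le_sub_right (G.degree_le_maxDegree w) 1

end Aux3


/-- If $G$ is a caterpillar tree (every vertex is within distance 1 of a central path)
with maximum degree $Δ ≥ 2$, then every BFS layer from every vertex has size at most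
$2(Δ-1)$; i.e., the BFS width is at most $2(Δ-1)$. -/
theorem bfsw_caterpillar {V : Type*} [Fintype V]
    (G : SimpleGraph V) [DecidableRel G.Adj] (hT : G.IsTree)
    (hcat : ∃ (x y : V) (p : G.Walk x y), p.IsPath ∧
      ∀ u : V, ∃ s ∈ p.support, G.dist s u ≤ 1)
    (hΔ : 2 ≤ G.maxDegree) :
    ∀ (v : V) (i : ℕ), layerCard G v i ≤ 2 * (G.maxDegree - 1) := by
  classical
  obtain ⟨x, y, p, hp, hcov⟩ := hcat
  have hc := hT.isConnected
  intro v i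
  unfold layerCard
  rcases Nat.lt_or_ge i 2 with hi | hi
  · interval_cases i
    · have hset : {u : V | G.dist v u = 0} = {v} := by
        ext u
        simp only [Set.mem_setOf_eq, Set.mem_singleton_iff, hc.dist_eq_zero_iff]
        exact comm
      rw [hset, Set.ncard_singleton]
      omega
    · have hsub : {u : V | G.dist v u = 1} ⊆ G.neighborSet v := fun u hu =>
        dist_eq_one_iff_adj.mp hu
      have h1 : {u : V | G.dist v u = 1}.ncard ≤ (G.neighborSet v).ncard :=
        Set.ncard_le_ncard hsub (Set.toFinite _)
      have h2 : (G.neighborSet v).ncard = G.degree v := by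
        rw [Set.ncard_eq_toFinset_card', ← neighborFinset_def]; rfl
      have h3 := G.degree_le_maxDegree v
      omega
  · obtain ⟨a, b, hab⟩ := spine_layer_le_two hT hp v (i - 1)
    have hsub : {u : V | G.dist v u = i} ⊆
        {u : V | G.Adj a u ∧ G.dist v u = i ∧ G.dist v a = i - 1}
        ∪ {u : V | G.Adj b u ∧ G.dist v u = i ∧ G.dist v b = i - 1} := by
      intro u hu
      have hu' : G.dist v u = i := hu
      obtain ⟨w, hwadj, hwd⟩ := exists_parent hc hu' (by omega)
      have hwS : w ∈ p.support := by
        by_contra hwS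
        obtain ⟨s, hsS, hall⟩ := leaf_unique_nbr hT hcov hwS
        have hu_eq : u = s := hall u hwadj
        obtain ⟨z, hzadj, hzd⟩ := exists_parent hc hwd (by omega)
        have hz_eq : z = s := hall z hzadj.symm
        rw [hz_eq, ← hu_eq, hu'] at hzd
        omega
      rcases hab w hwS hwd with rfl | rfl
      · exact Or.inl ⟨hwadj, hu', hwd⟩
      · exact Or.inr ⟨hwadj, hu', hwd⟩
    calc {u : V | G.dist v u = i}.ncard
        ≤ ({u : V | G.Adj a u ∧ G.dist v u = i ∧ G.dist v a = i - 1}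
          ∪ {u : V | G.Adj b u ∧ G.dist v u = i ∧ G.dist v b = i - 1}).ncard :=
          Set.ncard_le_ncard hsub (Set.toFinite _)
      _ ≤ {u : V | G.Adj a u ∧ G.dist v u = i ∧ G.dist v a = i - 1}.ncard
          + {u : V | G.Adj b u ∧ G.dist v u = i ∧ G.dist v b = i - 1}.ncard :=
          Set.ncard_union_le _ _
      _ ≤ (G.maxDegree - 1) + (G.maxDegree - 1) :=
          add_le_add (childSet_bound hT v a hi) (childSet_bound hT v b hi)
      _ = 2 * (G.maxDegree - 1) := by omega
end

section
/- For every integer j ≥ 1 there exists a tree T on n = 3·2^j vertices with bandwidth at most 2 such that the BFS layering from some vertex has a layer of size at least j + 2; hence bfsw(T) ≥ log₂(n/3) + 2 while bw(T) ≤ 2. -/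
/-!
Lay the tree out on the positions `0, …, 3h - 1` (with `h = 2^j`), the spine on the odd positions
and each pendant path interleaved on the even positions right after its attachment point; then
every vertex is within two positions of its parent, so the identity layout has bandwidth `2`.
An explicit depth function with `depth v = depth (parent v) + 1` shows at once that the graph is a
tree (a vertex of maximal depth on a cycle would have two parents) and that depth is the BFS
distance from `u_0`; the far end `u_h` of the spine and the far ends of all `j + 1` pendants lie at
depth `h`.
-/

open SimpleGraph

namespace SimpleGraph

variable {V : Type*} {G : SimpleGraph V}

theorem Walk.le_add_length_of_adj {f : V → ℕ} (hf : ∀ ⦃a b⦄, G.Adj a b → f b ≤ f a + 1)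
    {u v : V} (p : G.Walk u v) : f v ≤ f u + p.length := by
  induction p with
  | nil => simp
  | cons hadj _ ih => have := hf hadj; simp only [Walk.length_cons]; omega

def ofParent (parent : V → V) : SimpleGraph V :=
  fromRel fun a b => parent a = b

@[simp]
theorem ofParent_adj {parent : V → V} {a b : V} :
    (ofParent parent).Adj a b ↔ a ≠ b ∧ (parent a = b ∨ parent b = a) :=
  fromRel_adj _ a b

structure IsDepthFunction (parent : V → V) (root : V) (depth : V → ℕ) : Prop where
  parent_root : parent root = root
  depth_root : depth root = 0
  depth_eq : ∀ v, v ≠ root → depth v = depth (parent v) + 1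

namespace IsDepthFunction

variable {parent : V → V} {root : V} {depth : V → ℕ}

theorem depth_eq_of_parent_eq (hd : IsDepthFunction parent root depth) {a b : V} (hab : a ≠ b)
    (h : parent a = b) : depth a = depth b + 1 := by
  have ha : a ≠ root := by rintro rfl; exact hab (hd.parent_root ▸ h)
  rw [← h]; exact hd.depth_eq a ha

theorem depth_le_of_adj (hd : IsDepthFunction parent root depth) ⦃a b : V⦄
    (h : (ofParent parent).Adj a b) : depth b ≤ depth a + 1 := by
  obtain ⟨hab, h | h⟩ := ofParent_adj.1 h
  · have := hd.depth_eq_of_parent_eq hab h; omega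
  · have := hd.depth_eq_of_parent_eq hab.symm h; omega

theorem parent_eq_of_adj (hd : IsDepthFunction parent root depth) {a b : V}
    (h : (ofParent parent).Adj a b) (hba : depth b ≤ depth a) : parent a = b := by
  obtain ⟨hab, h | h⟩ := ofParent_adj.1 h
  · exact h
  · have := hd.depth_eq_of_parent_eq hab.symm h; omega

theorem exists_walk_length_eq (hd : IsDepthFunction parent root depth) (v : V) :
    ∃ w : (ofParent parent).Walk v root, w.length = depth v := by
  induction hn : depth v using Nat.strong_induction_on generalizing v with
  | _ n ih =>
    by_cases hv : v = root
    · subst hv; exact ⟨.nil, by simp [hd.depth_root, ← hn]⟩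
    · have hstep := hd.depth_eq v hv
      have hadj : (ofParent parent).Adj v (parent v) :=
        ofParent_adj.2 ⟨fun h => by rw [← h] at hstep; omega, .inl rfl⟩
      obtain ⟨w, hw⟩ := ih _ (by omega) (parent v) rfl
      exact ⟨.cons hadj w, by simp [hw]; omega⟩

theorem dist_root_eq (hd : IsDepthFunction parent root depth) (v : V) :
    (ofParent parent).dist root v = depth v := by
  obtain ⟨w, hw⟩ := hd.exists_walk_length_eq v
  have hle := dist_le w.reverse
  obtain ⟨p, hp⟩ := w.reverse.reachable.exists_walk_length_eq_dist
  have hge := p.le_add_length_of_adj hd.depth_le_of_adj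
  rw [Walk.length_reverse] at hle
  rw [hd.depth_root] at hge
  omega

theorem connected (hd : IsDepthFunction parent root depth) : (ofParent parent).Connected :=
  have reach v : (ofParent parent).Reachable v root :=
    let ⟨w, _⟩ := hd.exists_walk_length_eq v; w.reachable
  @Connected.mk _ _ (fun a b => (reach a).trans (reach b).symm) ⟨root⟩

/-- On a cycle, both neighbours of a vertex of maximal depth would be its parent. -/
theorem isAcyclic (hd : IsDepthFunction parent root depth) : (ofParent parent).IsAcyclic := by
  classical
  intro v c hc
  obtain ⟨u, hu, hmax⟩ := c.support.toFinset.exists_max_image depth ⟨v, by simp⟩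
  rw [List.mem_toFinset] at hu
  set c' := c.rotate u hu
  have hc' : c'.IsCycle := hc.rotate hu
  have parent_eq {w : V} (hw : w ∈ c'.support) (hadj : (ofParent parent).Adj u w) :
      parent u = w :=
    hd.parent_eq_of_adj hadj <|
      hmax w (List.mem_toFinset.2 ((c.mem_support_rotate_iff u hu).1 hw))
  exact hc'.snd_ne_penultimate <|
    (parent_eq (c'.getVert_mem_support 1) (c'.adj_snd hc'.not_nil)).symm.trans
      (parent_eq (c'.getVert_mem_support _) (c'.adj_penultimate hc'.not_nil).symm)

theorem isTree (hd : IsDepthFunction parent root depth) : (ofParent parent).IsTree :=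
  ⟨hd.connected, hd.isAcyclic⟩

end IsDepthFunction

end SimpleGraph

theorem bw_le_of_forall_adj {n b : ℕ} {G : SimpleGraph (Fin n)}
    (hG : ∀ u w, G.Adj u w → ((u : ℤ) - w).natAbs ≤ b) : bw G ≤ b :=
  Nat.sInf_le ⟨finCongr (Fintype.card_fin n).symm, by simpa using hG⟩

namespace LevelTwoTree

/- Vertices are the positions `0, …, 3h - 1` of the layout: the spine `u_0, …, u_h` sits at
`2h - 1, 2h - 3, …, 1, 0`, the pendant attached at `u_{h - 2^i}` (position `2^(i+1) - 1`) fills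
the even positions in `[2^(i+1), min (2^(i+2)) (2h))`, and the pendant attached at `u_0` fills
`[2h, 3h)`. `depthPos h p` is the distance from `u_0`. -/
def parentPos (h p : ℕ) : ℕ :=
  if 2 * h ≤ p then p - 1
  else if p % 2 = 1 then min (p + 2) (2 * h - 1)
  else if p = 0 then 1
  else if p = 2 ^ Nat.log 2 p then p - 1
  else p - 2

def depthPos (h p : ℕ) : ℕ :=
  if 2 * h ≤ p then p + 1 - 2 * h
  else if p % 2 = 1 then h - (p + 1) / 2
  else h + p / 2 + 1 - 2 ^ Nat.log 2 p

variable {h p : ℕ}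

theorem parentPos_lt (hp : p < 3 * h) : parentPos h p < 3 * h := by
  unfold parentPos; split_ifs <;> omega

theorem natAbs_sub_parentPos_le_two : ((p : ℤ) - parentPos h p).natAbs ≤ 2 := by
  unfold parentPos; split_ifs <;> omega

theorem parentPos_root (hh : 0 < h) : parentPos h (2 * h - 1) = 2 * h - 1 := by
  unfold parentPos; split_ifs <;> omega

theorem depthPos_root (hh : 0 < h) : depthPos h (2 * h - 1) = 0 := by
  unfold depthPos; split_ifs <;> omega

theorem log_sub_two_of_even (hp : p % 2 = 0) (hp0 : p ≠ 0) (hpow : p ≠ 2 ^ Nat.log 2 p) :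
    Nat.log 2 (p - 2) = Nat.log 2 p := by
  have hle := Nat.pow_log_le_self 2 hp0
  have hlog : Nat.log 2 p ≠ 0 := (Nat.log_pos one_lt_two (by omega)).ne'
  have heven : 2 ^ Nat.log 2 p % 2 = 0 := by
    rw [← Nat.succ_pred_eq_of_ne_zero hlog, pow_succ]; omega
  exact Nat.log_eq_of_pow_le_of_lt_pow (by omega)
    ((Nat.sub_le p 2).trans_lt (Nat.lt_pow_succ_log_self one_lt_two p))

theorem depthPos_eq_parentPos_add_one (hp : p ≠ 2 * h - 1) :
    depthPos h p = depthPos h (parentPos h p) + 1 := by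
  rcases eq_or_ne p 0 with rfl | hp0
  · have hh : h ≠ 0 := by omega
    simp [parentPos, depthPos, hh]; split_ifs <;> omega
  by_cases hpend : p % 2 = 0 ∧ p < 2 * h
  · obtain ⟨heven, hlt⟩ := hpend
    have hle := Nat.pow_log_le_self 2 hp0
    by_cases hpow : p = 2 ^ Nat.log 2 p
    · simp only [parentPos, depthPos]; split_ifs <;> omega
    · have := log_sub_two_of_even heven hp0 hpow
      simp only [parentPos, depthPos]; split_ifs <;> (try rw [this]) <;> omega
  · simp only [parentPos, depthPos]; split_ifs <;> omega

theorem depthPos_last (hh : 0 < h) : depthPos h (3 * h - 1) = h := by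
  unfold depthPos; split_ifs <;> omega

theorem log_two_pow_succ_sub_two (i : ℕ) : Nat.log 2 (2 ^ (i + 1) - 2) = i := by
  rcases Nat.eq_zero_or_pos i with rfl | hi
  · simp
  · have hpow : 2 ≤ 2 ^ i := Nat.le_self_pow hi.ne' 2
    exact Nat.log_eq_of_pow_le_of_lt_pow (by rw [pow_succ]; omega) (by omega)

theorem depthPos_two_pow_succ_sub_two {i : ℕ} (hi : 2 ^ i ≤ h) :
    depthPos h (2 ^ (i + 1) - 2) = h := by
  have hpow : 1 ≤ 2 ^ i := Nat.one_le_two_pow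
  unfold depthPos
  rw [log_two_pow_succ_sub_two, pow_succ]
  split_ifs <;> omega

/-- `2 ^ (i + 1) - 2` is `u_h` for `i = 0` and the end of a pendant otherwise; `3h - 1` ends the
pendant attached at `u_0`. -/
theorem exists_finset_depthPos_eq (hh : 0 < h) :
    ∃ s : Finset ℕ, s.card = Nat.log 2 h + 2 ∧ ∀ p ∈ s, p < 3 * h ∧ depthPos h p = h := by
  have hends {i : ℕ} (hi : i ∈ Finset.range (Nat.log 2 h + 1)) :
      2 ^ i ≤ h ∧ 2 ^ (i + 1) - 2 < 2 * h := by
    have : 2 ^ i ≤ h := (Nat.pow_le_pow_right two_pos (Nat.lt_succ_iff.1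
      (Finset.mem_range.1 hi))).trans (Nat.pow_log_le_self 2 hh.ne')
    rw [pow_succ]; omega
  have hinj : Function.Injective fun i => 2 ^ (i + 1) - 2 := fun a b hab => by
    have := Nat.le_self_pow a.succ_ne_zero 2; have := Nat.le_self_pow b.succ_ne_zero 2
    exact Nat.succ_injective (Nat.pow_right_injective le_rfl (by simp only at hab ⊢; omega))
  refine ⟨insert (3 * h - 1) ((Finset.range (Nat.log 2 h + 1)).image fun i => 2 ^ (i + 1) - 2),
    ?_, ?_⟩
  · rw [Finset.card_insert_of_notMem, Finset.card_image_of_injective _ hinj, Finset.card_range]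
    simp only [Finset.mem_image, not_exists, not_and]
    intro i hi; have := (hends hi).2; omega
  · simp only [Finset.mem_insert, Finset.mem_image]
    rintro p (rfl | ⟨i, hi, rfl⟩)
    · exact ⟨by omega, depthPos_last hh⟩
    · exact ⟨by have := (hends hi).2; omega, depthPos_two_pow_succ_sub_two (hends hi).1⟩

def parent (h : ℕ) (a : Fin (3 * h)) : Fin (3 * h) :=
  ⟨parentPos h a, parentPos_lt a.2⟩

def root (hh : 0 < h) : Fin (3 * h) :=
  ⟨2 * h - 1, by omega⟩

theorem isDepthFunction (hh : 0 < h) :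
    IsDepthFunction (parent h) (root hh) fun a => depthPos h a where
  parent_root := Fin.ext (parentPos_root hh)
  depth_root := depthPos_root hh
  depth_eq _ ha := depthPos_eq_parentPos_add_one fun hv => ha (Fin.ext hv)

end LevelTwoTree

open LevelTwoTree

def levelTwoTree (h : ℕ) : SimpleGraph (Fin (3 * h)) :=
  ofParent (parent h)

theorem isTree_levelTwoTree {h : ℕ} (hh : 0 < h) : (levelTwoTree h).IsTree :=
  (isDepthFunction hh).isTree

theorem bw_levelTwoTree_le_two (h : ℕ) : bw (levelTwoTree h) ≤ 2 := by
  refine bw_le_of_forall_adj fun u w huw => ?_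
  obtain ⟨-, rfl | rfl⟩ := ofParent_adj.1 huw
  · exact natAbs_sub_parentPos_le_two
  · have := natAbs_sub_parentPos_le_two (h := h) (p := w)
    simp only [parent]; omega

theorem log_add_two_le_layerCard_levelTwoTree {h : ℕ} (hh : 0 < h) :
    Nat.log 2 h + 2 ≤ layerCard (levelTwoTree h) (root hh) h := by
  obtain ⟨s, hcard, hs⟩ := exists_finset_depthPos_eq hh
  calc Nat.log 2 h + 2 = (s.attachFin fun p hp => (hs p hp).1).card := by simp [hcard]
    _ ≤ layerCard (levelTwoTree h) (root hh) h := by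
      rw [layerCard, ← Set.ncard_coe_finset]
      refine Set.ncard_le_ncard (fun u hu => ?_) (Set.toFinite _)
      simp only [Finset.coe_attachFin, Set.mem_preimage, Finset.mem_coe] at hu
      exact ((isDepthFunction hh).dist_root_eq u).trans (hs u hu).2

theorem exists_tree_bw_two_bfsw_log_general (j : ℕ) :
    ∃ (n : ℕ) (T : SimpleGraph (Fin n)),
      n = 3 * 2 ^ j ∧ T.IsTree ∧ bw T ≤ 2 ∧
      ∃ (v : Fin n) (i : ℕ), j + 2 ≤ layerCard T v i := by
  have hh : 0 < 2 ^ j := Nat.two_pow_pos j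
  refine ⟨_, levelTwoTree (2 ^ j), rfl, isTree_levelTwoTree hh, bw_levelTwoTree_le_two _,
    root hh, 2 ^ j, ?_⟩
  simpa [Nat.log_pow] using log_add_two_le_layerCard_levelTwoTree hh

/-- For every $j ≥ 1$ there is a tree on $n = 3·2^j$ vertices with bandwidth at
most 2 whose BFS layering from some vertex has a layer of size at least $j+2$,
i.e. bfsw$(T) ≥ \log_2(n/3) + 2$ while bw$(T) ≤ 2$. -/
theorem exists_tree_bw_two_bfsw_log (j : ℕ) (hj : 1 ≤ j) :
    ∃ (n : ℕ) (T : SimpleGraph (Fin n)),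
      n = 3 * 2 ^ j ∧ T.IsTree ∧ bw T ≤ 2 ∧
      ∃ (v : Fin n) (i : ℕ), j + 2 ≤ layerCard T v i :=
  exists_tree_bw_two_bfsw_log_general j
end

section
/- Let T be a tree with a linear layout of bandwidth b, and let a spine vertex set S (a path in T containing both extreme vertices of the layout) be removed. Then in the induced layout on each connected component of T − S (preserving relative order of its vertices), every edge has length at most b − 1. -/
open SimpleGraph

private lemma spine_crossing {V : Type*} [Fintype V] (T : SimpleGraph V)
    (f : V ≃ Fin (Fintype.card V)) (m M : ℕ) (hmM : m < M) :
    ∀ {a y : V} (q : T.Walk a y),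
      (∀ z ∈ q.support, (f z : ℕ) < m ∨ M < (f z : ℕ)) →
      (f a : ℕ) < m → M < (f y : ℕ) →
      ∃ c d, T.Adj c d ∧ (f c : ℕ) < m ∧ M < (f d : ℕ) := by
  intro a y q
  induction q with
  | nil =>
    intro _ ha hy
    omega
  | @cons a' v y' h q ih =>
    intro hsup ha hy
    have hv : (f v : ℕ) < m ∨ M < (f v : ℕ) := by
      apply hsup
      simp [SimpleGraph.Walk.support_cons]
    rcases hv with hv | hv
    · exact ih (fun z hz => hsup z (by simp [SimpleGraph.Walk.support_cons, hz])) hv hy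
    · exact ⟨a', v, h, ha, hv⟩

/-- Spine-removal lemma: let $T$ be a tree with a linear layout $f$ of bandwidth
$≤ b$, and let the spine be a path whose endpoints are the extreme vertices of the
layout. Then for every edge of $T$ avoiding the spine, the induced layout length of
the edge (one plus the number of non-spine vertices strictly between its endpoints)
is at most $b - 1$. -/
theorem spine_removal_bandwidth {V : Type*} [Fintype V]
    (T : SimpleGraph V) (hT : T.IsTree)
    (f : V ≃ Fin (Fintype.card V)) (b : ℕ)
    (hband : ∀ u w : V, T.Adj u w → ((f u : ℤ) - (f w : ℤ)).natAbs ≤ b)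
    (x y : V) (p : T.Walk x y) (hp : p.IsPath)
    (hx : (f x : ℕ) = 0) (hy : (f y : ℕ) = Fintype.card V - 1) :
    ∀ u w : V, T.Adj u w → u ∉ p.support → w ∉ p.support →
      ({z : V | z ∉ p.support ∧
          min (f u : ℕ) (f w : ℕ) < (f z : ℕ) ∧
          (f z : ℕ) < max (f u : ℕ) (f w : ℕ)}).ncard + 1 ≤ b - 1 := by
  intro u w huw hu hw
  have hinj : ∀ a c : V, (f a : ℕ) = (f c : ℕ) → a = c := by
    intro a c h
    exact f.injective (Fin.ext h)
  set m := min (f u : ℕ) (f w : ℕ) with hm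
  set M := max (f u : ℕ) (f w : ℕ) with hM
  have hfuw : (f u : ℕ) ≠ (f w : ℕ) := fun h => huw.ne (hinj _ _ h)
  have hmM : m < M := by omega
  set Z : Set V := {z : V | z ∉ p.support ∧ m < (f z : ℕ) ∧ (f z : ℕ) < M} with hZ
  have hcount : ∀ (S : Set V), (∀ z ∈ S, m < (f z : ℕ) ∧ (f z : ℕ) < M) →
      S.ncard ≤ M - m - 1 := by
    intro S hS
    have hinj' : Set.InjOn (fun z : V => (f z : ℕ)) S := fun a _ c _ h => hinj a c h
    have him : (fun z : V => (f z : ℕ)) '' S ⊆ Set.Ioo m M := by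
      rintro _ ⟨z, hz, rfl⟩
      exact ⟨(hS z hz).1, (hS z hz).2⟩
    have h1 : S.ncard = ((fun z : V => (f z : ℕ)) '' S).ncard :=
      (Set.ncard_image_of_injOn hinj').symm
    have h2 : ((fun z : V => (f z : ℕ)) '' S).ncard ≤ (Set.Ioo m M).ncard :=
      Set.ncard_le_ncard him (Set.finite_Ioo m M)
    have h3 : (Set.Ioo m M).ncard = M - m - 1 := by
      rw [← Finset.coe_Ioo, Set.ncard_coe_finset, Nat.card_Ioo]
    omega
  have hlen : M - m ≤ b := by
    have h := hband u w huw
    omega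
  by_cases hs : ∃ z ∈ p.support, m < (f z : ℕ) ∧ (f z : ℕ) < M
  · obtain ⟨z0, hz0s, hz0⟩ := hs
    have hz0Z : z0 ∉ Z := fun h => h.1 hz0s
    have hins : (insert z0 Z).ncard = Z.ncard + 1 :=
      Set.ncard_insert_of_notMem hz0Z (Set.toFinite _)
    have hb := hcount (insert z0 Z) (by
      rintro z (rfl | hz)
      · exact hz0
      · exact hz.2)
    omega
  · push_neg at hs
    have hsup : ∀ z ∈ p.support, (f z : ℕ) < m ∨ M < (f z : ℕ) := by
      intro z hz
      have h1 := hs z hz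
      have hzu : (f z : ℕ) ≠ (f u : ℕ) := fun h => hu ((hinj z u h) ▸ hz)
      have hzw : (f z : ℕ) ≠ (f w : ℕ) := fun h => hw ((hinj z w h) ▸ hz)
      omega
    have hxs := p.start_mem_support
    have hys := p.end_mem_support
    have hgu : (f u : ℕ) ≠ 0 := fun h => hu ((hinj u x (by omega)) ▸ hxs)
    have hgw : (f w : ℕ) ≠ 0 := fun h => hw ((hinj w x (by omega)) ▸ hxs)
    have hun : (f u : ℕ) < Fintype.card V := (f u).isLt
    have hwn : (f w : ℕ) < Fintype.card V := (f w).isLt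
    have hgu' : (f u : ℕ) ≠ Fintype.card V - 1 := fun h => hu ((hinj u y (by omega)) ▸ hys)
    have hgw' : (f w : ℕ) ≠ Fintype.card V - 1 := fun h => hw ((hinj w y (by omega)) ▸ hys)
    obtain ⟨c, d, hcd, hc, hd⟩ := spine_crossing T f m M hmM p hsup
      (by omega) (by omega)
    have h := hband c d hcd
    have hZc := hcount Z (fun z hz => hz.2)
    omega
end

section
/- For the subdivided-star-of-stars graph G (center a, m paths of m internal vertices ending at b_1,...,b_m, with m leaves attached to each b_i), every BFS layering has a layer of size Ω(n) where n is the number of vertices: the layering from any root has maximum layer size ≥ m²/c for some absolute constant c, hence bfsw_min(G) = Θ(n). -/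
open SimpleGraph

/-- Vertex type of the subdivided-star-of-stars: the center, the `m × m` path
vertices (path index, position), the hubs `b i`, and the `m × m` leaves. -/
abbrev SSV (m : ℕ) : Type := (Unit ⊕ Fin m × Fin m) ⊕ (Fin m ⊕ Fin m × Fin m)

/-- Adjacency: center–first path vertex, consecutive path vertices, last path
vertex–hub `b i`, and hub `b i`–its leaves. -/
def ssRel (m : ℕ) : SSV m → SSV m → Prop
  | Sum.inl (Sum.inl _), Sum.inl (Sum.inr ⟨_, j⟩) => (j : ℕ) = 0
  | Sum.inl (Sum.inr ⟨i, j⟩), Sum.inl (Sum.inr ⟨i2, j2⟩) => i = i2 ∧ (j2 : ℕ) = (j : ℕ) + 1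
  | Sum.inl (Sum.inr ⟨i, j⟩), Sum.inr (Sum.inl i2) => i = i2 ∧ (j : ℕ) = m - 1
  | Sum.inr (Sum.inl i), Sum.inr (Sum.inr ⟨i2, _⟩) => i = i2
  | _, _ => False

/-- The subdivided-star-of-stars graph: a center joined by `m` paths of `m`
internal vertices to hubs `b 1, …, b m`, each hub carrying `m` pendant leaves. -/
def SSG (m : ℕ) : SimpleGraph (SSV m) := SimpleGraph.fromRel (ssRel m)


def branchMap (m : ℕ) (σ : Equiv.Perm (Fin m)) : SSV m ≃ SSV m :=
  Equiv.sumCongr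
    (Equiv.sumCongr (Equiv.refl Unit) (Equiv.prodCongr σ (Equiv.refl (Fin m))))
    (Equiv.sumCongr σ (Equiv.prodCongr σ (Equiv.refl (Fin m))))
lemma ssRel_branchMap {m : ℕ} (σ : Equiv.Perm (Fin m)) (x y : SSV m) :
    ssRel m (branchMap m σ x) (branchMap m σ y) ↔ ssRel m x y := by
  rcases x with (u | ⟨i, j⟩) | (i | ⟨i, k⟩) <;>
    rcases y with (u2 | ⟨i2, j2⟩) | (i2 | ⟨i2, k2⟩) <;>
      simp [ssRel, branchMap, σ.injective.eq_iff]

def leafMap (m : ℕ) (t : Fin m) (σ : Equiv.Perm (Fin m)) : SSV m ≃ SSV m :=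
  Equiv.sumCongr (Equiv.refl _)
    (Equiv.sumCongr (Equiv.refl _)
      (Equiv.prodShear (Equiv.refl (Fin m))
        (fun i => if i = t then σ else Equiv.refl (Fin m))))

lemma ssRel_leafMap {m : ℕ} (t : Fin m) (σ : Equiv.Perm (Fin m)) (x y : SSV m) :
    ssRel m (leafMap m t σ x) (leafMap m t σ y) ↔ ssRel m x y := by
  rcases x with (u | ⟨i, j⟩) | (i | ⟨i, k⟩) <;>
    rcases y with (u2 | ⟨i2, j2⟩) | (i2 | ⟨i2, k2⟩) <;>
      simp [ssRel, leafMap, Equiv.prodShear]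

def branchIso (m : ℕ) (σ : Equiv.Perm (Fin m)) : SSG m ≃g SSG m where
  toEquiv := branchMap m σ
  map_rel_iff' := by
    intro x y
    simp only [SSG, fromRel_adj, Equiv.coe_fn_mk]
    rw [ssRel_branchMap, ssRel_branchMap, (branchMap m σ).injective.ne_iff]

def leafIso (m : ℕ) (t : Fin m) (σ : Equiv.Perm (Fin m)) : SSG m ≃g SSG m where
  toEquiv := leafMap m t σ
  map_rel_iff' := by
    intro x y
    simp only [SSG, fromRel_adj, Equiv.coe_fn_mk]
    rw [ssRel_leafMap, ssRel_leafMap, (leafMap m t σ).injective.ne_iff]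

def branchOf {m : ℕ} : SSV m → Option (Fin m)
  | Sum.inl (Sum.inl _) => none
  | Sum.inl (Sum.inr ⟨i, _⟩) => some i
  | Sum.inr (Sum.inl i) => some i
  | Sum.inr (Sum.inr ⟨i, _⟩) => some i

lemma branchMap_fix {m : ℕ} (σ : Equiv.Perm (Fin m)) (v : SSV m)
    (h : ∀ i ∈ branchOf v, σ i = i) : branchMap m σ v = v := by
  rcases v with (u | ⟨i, j⟩) | (i | ⟨i, k⟩) <;> simp_all [branchMap, branchOf]

lemma leafMap_fix {m : ℕ} (t : Fin m) (σ : Equiv.Perm (Fin m)) (v : SSV m)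
    (h : branchOf v ≠ some t) : leafMap m t σ v = v := by
  rcases v with (u | ⟨i, j⟩) | (i | ⟨i, k⟩) <;> simp_all [leafMap, branchOf, Equiv.prodShear]

lemma branchIso_apply {m : ℕ} (σ : Equiv.Perm (Fin m)) (x : SSV m) :
    branchIso m σ x = branchMap m σ x := rfl

lemma leafIso_apply {m : ℕ} (t : Fin m) (σ : Equiv.Perm (Fin m)) (x : SSV m) :
    leafIso m t σ x = leafMap m t σ x := rfl

lemma iso_edist_le {V : Type*} {G : SimpleGraph V} (e : G ≃g G) (u v : V) :
    G.edist (e u) (e v) ≤ G.edist u v := by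
  conv_rhs => rw [edist_eq_sInf]
  refine le_sInf ?_
  rintro b ⟨w, rfl⟩
  simpa using G.edist_le (w.map e.toHom)

lemma iso_dist_eq {V : Type*} {G : SimpleGraph V} (e : G ≃g G) (u v : V) :
    G.dist (e u) (e v) = G.dist u v := by
  have h1 := iso_edist_le e u v
  have h2 := iso_edist_le e.symm (e u) (e v)
  simp only [RelIso.symm_apply_apply] at h2
  have h3 : G.edist (e u) (e v) = G.edist u v := le_antisymm h1 h2
  simp [SimpleGraph.dist, h3]


/-- For the subdivided-star-of-stars graph, every BFS layering has a layer of size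
$Ω(n)$: there is an absolute constant $c > 0$ such that, for every $m ≥ 2$ and every
root $v$, some layer has at least $m²/c$ vertices; hence bfsw_min is $Θ(n)$. -/
theorem ss_graph_bfswMin_linear :
    ∃ c : ℕ, 0 < c ∧
      ∀ m : ℕ, 2 ≤ m → ∀ v : SSV m, ∃ i : ℕ,
        m * m / c ≤ layerCard (SSG m) v i := by
  classical
  refine ⟨2, by norm_num, ?_⟩
  intro m hm v
  have hm0 : 0 < m := by omega
  set i0 : Fin m := (branchOf v).getD ⟨0, hm0⟩ with hi0
  have : Nontrivial (Fin m) := Fin.nontrivial_iff_two_le.mpr hm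
  obtain ⟨i1, hi1⟩ : ∃ i1 : Fin m, i1 ≠ i0 := exists_ne i0
  set z : Fin m := ⟨0, hm0⟩
  set D := (SSG m).dist v (Sum.inr (Sum.inr (i1, z))) with hD
  have key : ∀ i : Fin m, i ≠ i0 → ∀ k : Fin m,
      (SSG m).dist v (Sum.inr (Sum.inr (i, k))) = D := by
    intro i hi k
    set σ := Equiv.swap i i1 with hσ
    have hb : ∀ j ∈ branchOf v, σ j = j := by
      intro j hj
      have hji : i0 = j := by
        rw [Option.mem_def] at hj
        simp [hi0, hj]
      subst hji
      exact Equiv.swap_apply_of_ne_of_ne (Ne.symm hi) (Ne.symm hi1)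
    have hb2 : branchOf v ≠ some i1 := by
      intro h
      have h01 : i0 = i1 := by simp [hi0, h]
      exact hi1 h01.symm
    have hfix1 : branchIso m σ v = v := by
      rw [branchIso_apply]; exact branchMap_fix σ v hb
    have hfix2 : leafIso m i1 (Equiv.swap k z) v = v := by
      rw [leafIso_apply]; exact leafMap_fix i1 (Equiv.swap k z) v hb2
    have happ1 : branchIso m σ (Sum.inr (Sum.inr (i, k))) = Sum.inr (Sum.inr (i1, k)) := by
      rw [branchIso_apply]
      simp [branchMap, hσ, Equiv.swap_apply_left]
    have happ2 : leafIso m i1 (Equiv.swap k z) (Sum.inr (Sum.inr (i1, k)))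
        = Sum.inr (Sum.inr (i1, z)) := by
      rw [leafIso_apply]
      simp [leafMap, Equiv.prodShear, Equiv.swap_apply_left]
    have h1 := iso_dist_eq (branchIso m σ) v (Sum.inr (Sum.inr (i, k)))
    rw [hfix1, happ1] at h1
    have h2 := iso_dist_eq (leafIso m i1 (Equiv.swap k z)) v (Sum.inr (Sum.inr (i1, k)))
    rw [hfix2, happ2] at h2
    rw [← h1, ← h2, hD]
  refine ⟨D, ?_⟩
  set S : Finset (SSV m) :=
    ((Finset.univ.erase i0) ×ˢ (Finset.univ : Finset (Fin m))).image
      (fun p => Sum.inr (Sum.inr p)) with hS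
  have hinj : Function.Injective (fun p : Fin m × Fin m => (Sum.inr (Sum.inr p) : SSV m)) := by
    intro a b h; simpa using h
  have hcard : S.card = (m - 1) * m := by
    rw [hS, Finset.card_image_of_injective _ hinj, Finset.card_product,
      Finset.card_erase_of_mem (Finset.mem_univ _), Finset.card_univ]
    simp
  have hsub : (↑S : Set (SSV m)) ⊆ {u | (SSG m).dist v u = D} := by
    intro u hu
    simp only [hS, Finset.coe_image, Set.mem_image, Finset.mem_coe, Finset.mem_product,
      Finset.mem_erase] at hu
    obtain ⟨⟨i, k⟩, ⟨⟨hi, -⟩, -⟩, rfl⟩ := hu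
    exact key i hi k
  have hle : S.card ≤ layerCard (SSG m) v D := by
    rw [layerCard, ← Set.ncard_coe_finset S]
    exact Set.ncard_le_ncard hsub (Set.toFinite _)
  refine le_trans ?_ (hcard ▸ hle)
  obtain ⟨p, rfl⟩ : ∃ p, m = p + 2 := ⟨m - 2, by omega⟩
  have h2 : (p + 2) * (p + 2) ≤ 2 * ((p + 2 - 1) * (p + 2)) := by
    have : p + 2 - 1 = p + 1 := rfl
    rw [this]; nlinarith
  calc (p + 2) * (p + 2) / 2 ≤ 2 * ((p + 2 - 1) * (p + 2)) / 2 := Nat.div_le_div_right h2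
    _ = (p + 2 - 1) * (p + 2) := Nat.mul_div_cancel_left _ (by norm_num)
end

section
/- If a connected graph G on n vertices has BFS width at most B, then the reconstruction algorithm that (1) queries d(v,u) for a fixed root v and all u, (2) queries d(a,b) for all pairs a,b with |d(v,a) − d(v,b)| ≤ 1, correctly recovers the edge set of G, and the number of distance queries it makes is at most (n−1) + (n−1)(3B−1)/2 = O(nB). -/
open SimpleGraph

/-! Every edge joins vertices whose distances from `v` differ by at most one, so it is among the
queried pairs and is recognised by `d(a, b) = 1`. The queried pairs are the edges of the graph on
`V \ {v}` joining distinct vertices in the same or adjacent layers; each layer has at most `B`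
vertices, so every vertex has at most `3B - 1` neighbours there, and the handshake lemma bounds
the number of edges by `(n - 1)(3B - 1)/2`. -/

namespace SimpleGraph

open Finset

variable {V : Type*}

theorem Adj.dist_le_dist_add_one {G : SimpleGraph V} {a b : V} (h : G.Adj a b) (u : V) :
    G.dist u a ≤ G.dist u b + 1 := by
  have := h.symm.diff_dist_adj (u := u)
  omega

def adjacentLevelsGraph (f : V → ℕ) : SimpleGraph V where
  Adj a b := a ≠ b ∧ f a ≤ f b + 1 ∧ f b ≤ f a + 1

instance [DecidableEq V] (f : V → ℕ) : DecidableRel (adjacentLevelsGraph f).Adj :=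
  inferInstanceAs (DecidableRel fun a b => a ≠ b ∧ f a ≤ f b + 1 ∧ f b ≤ f a + 1)

theorem edgeSet_adjacentLevelsGraph_deleteIncidenceSet (f : V → ℕ) (v : V) :
    ((adjacentLevelsGraph f).deleteIncidenceSet v).edgeSet =
      {p | ¬ p.IsDiag ∧ v ∉ p ∧
        ∃ a b, p = s(a, b) ∧ f a ≤ f b + 1 ∧ f b ≤ f a + 1} := by
  ext p
  induction p using Sym2.ind with
  | h a b =>
    simp only [mem_edgeSet, deleteIncidenceSet_adj, adjacentLevelsGraph, Set.mem_ofPred_eq,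
      Sym2.mk_isDiag_iff, Sym2.mem_iff, Sym2.eq_iff]
    constructor
    · rintro ⟨⟨hab, hd⟩, hv⟩
      exact ⟨hab, by tauto, a, b, by tauto, hd⟩
    · rintro ⟨hab, hv, a', b', hp, hd⟩
      refine ⟨⟨hab, ?_⟩, by tauto⟩
      rcases hp with ⟨rfl, rfl⟩ | ⟨rfl, rfl⟩ <;> omega

theorem degree_adjacentLevelsGraph_le [Fintype V] [DecidableEq V] {f : V → ℕ} {B : ℕ}
    (hf : ∀ i, #{u | f u = i} ≤ B) (a : V) :
    (adjacentLevelsGraph f).degree a ≤ 3 * B - 1 := by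
  let L i : Finset V := {u | f u = i}
  have hsub : (adjacentLevelsGraph f).neighborFinset a ⊆
      (L (f a - 1) ∪ L (f a) ∪ L (f a + 1)).erase a := by
    intro b hb
    obtain ⟨hab, hd⟩ : a ≠ b ∧ f a ≤ f b + 1 ∧ f b ≤ f a + 1 :=
      (mem_neighborFinset _ _ _).1 hb
    simp only [L, mem_erase, mem_union, mem_filter, mem_univ, true_and]
    exact ⟨Ne.symm hab, by omega⟩
  have hunion : #(L (f a - 1) ∪ L (f a) ∪ L (f a + 1)) ≤ 3 * B := by
    grw [card_union_le, card_union_le, hf, hf, hf]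
    omega
  have ha : a ∈ L (f a - 1) ∪ L (f a) ∪ L (f a + 1) := by simp [L]
  rw [← card_neighborFinset_eq_degree]
  grw [card_le_card hsub, card_erase_of_mem ha, hunion]

theorem two_mul_card_edgeFinset_deleteIncidenceSet_le [Fintype V] [DecidableEq V]
    (G : SimpleGraph V) [DecidableRel G.Adj] {d : ℕ} (hd : ∀ a, G.degree a ≤ d) (v : V) :
    2 * #(G.deleteIncidenceSet v).edgeFinset ≤ (Fintype.card V - 1) * d := by
  have hsum : G.degree v + ∑ a ∈ univ.erase v, G.degree a = 2 * #G.edgeFinset := by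
    rw [add_sum_erase _ (fun a => G.degree a) (mem_univ v),
      sum_degrees_eq_twice_card_edges]
  have hrest : ∑ a ∈ univ.erase v, G.degree a ≤ (Fintype.card V - 1) * d := by
    grw [sum_le_sum fun a _ => hd a, sum_const, card_erase_of_mem
      (mem_univ v), card_univ, smul_eq_mul]
  rw [card_edgeFinset_deleteIncidenceSet]
  omega

end SimpleGraph

open SimpleGraph Finset in
theorem reconstruction_query_complexity_general {V : Type*} [Fintype V]
    (G : SimpleGraph V) (B : ℕ)
    (hB : ∀ (w : V) (i : ℕ), layerCard G w i ≤ B) (v : V) :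
    (∀ a b : V, G.Adj a b ↔
      ((a = v ∨ b = v ∨ (G.dist v a ≤ G.dist v b + 1 ∧ G.dist v b ≤ G.dist v a + 1))
        ∧ G.dist a b = 1)) ∧
    (Fintype.card V - 1) +
      ({p : Sym2 V | ¬ p.IsDiag ∧ v ∉ p ∧
        ∃ a b : V, p = s(a, b) ∧
          G.dist v a ≤ G.dist v b + 1 ∧ G.dist v b ≤ G.dist v a + 1}).ncard
      ≤ (Fintype.card V - 1) + (Fintype.card V - 1) * (3 * B - 1) / 2 := by
  classical
  refine ⟨fun a b => ⟨fun h => ⟨?_, dist_eq_one_iff_adj.2 h⟩, (dist_eq_one_iff_adj.1 ·.2)⟩, ?_⟩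
  · exact .inr (.inr ⟨h.dist_le_dist_add_one v, h.symm.dist_le_dist_add_one v⟩)
  have hlayer (i : ℕ) : #{u | G.dist v u = i} ≤ B := by
    simpa [layerCard, Set.ncard_eq_toFinset_card'] using hB v i
  have hcount := two_mul_card_edgeFinset_deleteIncidenceSet_le _
    (degree_adjacentLevelsGraph_le hlayer) v
  rw [← edgeSet_adjacentLevelsGraph_deleteIncidenceSet, ← coe_edgeFinset, Set.ncard_coe_finset]
  gcongr
  exact (Nat.le_div_iff_mul_le two_pos).2 (by linarith)

/-- Reconstruction from a distance oracle: if every BFS layer of $G$ (from every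
root) has at most $B$ vertices, then (1) the algorithm that queries distances from a
fixed root $v$ and then queries all pairs lying in the same or adjacent layers
correctly identifies the edges (an edge is exactly a queried pair at distance 1),
and (2) the total number of queries is at most $(n-1) + (n-1)(3B-1)/2$. -/
theorem reconstruction_query_complexity {V : Type*} [Fintype V]
    (G : SimpleGraph V) (hG : G.Connected) (B : ℕ)
    (hB : ∀ (w : V) (i : ℕ), layerCard G w i ≤ B) (v : V) :
    (∀ a b : V, G.Adj a b ↔
      ((a = v ∨ b = v ∨ (G.dist v a ≤ G.dist v b + 1 ∧ G.dist v b ≤ G.dist v a + 1))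
        ∧ G.dist a b = 1)) ∧
    (Fintype.card V - 1) +
      ({p : Sym2 V | ¬ p.IsDiag ∧ v ∉ p ∧
        ∃ a b : V, p = s(a, b) ∧
          G.dist v a ≤ G.dist v b + 1 ∧ G.dist v b ≤ G.dist v a + 1}).ncard
      ≤ (Fintype.card V - 1) + (Fintype.card V - 1) * (3 * B - 1) / 2 :=
  reconstruction_query_complexity_general G B hB v
end
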